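/- arXiv:1612.04297 — 2 statements merged into one kernel-verified Lean document; each statement's English description precedes it below -/
import Mathlib

section
/- Let u and ρ be smooth solutions on the torus of ρ_t + (ρu)_x = 0 and u_t + u u_x = ρ u_{xx} + 2 ρ_x u_x (the pressureless Navier–Stokes system with L = ∂_{xx}). Then the quantity f := u + ρ_x satisfies the transport equation f_t + u f_x = 0, and consequently ‖ρ_x(·,t)‖_∞ ≤ 2‖u(·,0)‖_∞ + ‖ρ_x(·,0)‖_∞ for all t in the interval of existence. -/
open Set Function

lemma NS.slice1 {G : ℝ × ℝ → ℝ} (hG : ContDiff ℝ (⊤ : ℕ∞) G) (x t : ℝ) :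
    HasDerivAt (fun y => G (y, t)) (fderiv ℝ G (x, t) (1, 0)) x := by
  have h1 : HasDerivAt (fun y : ℝ => (y, t)) ((1 : ℝ), (0 : ℝ)) x :=
    (hasDerivAt_id x).prodMk (hasDerivAt_const x t)
  exact (hG.differentiable (by simp) (x, t)).hasFDerivAt.comp_hasDerivAt x h1

lemma NS.slice2 {G : ℝ × ℝ → ℝ} (hG : ContDiff ℝ (⊤ : ℕ∞) G) (x t : ℝ) :
    HasDerivAt (fun τ => G (x, τ)) (fderiv ℝ G (x, t) (0, 1)) t := by
  have h1 : HasDerivAt (fun τ : ℝ => (x, τ)) ((0 : ℝ), (1 : ℝ)) t :=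
    (hasDerivAt_const t x).prodMk (hasDerivAt_id t)
  exact (hG.differentiable (by simp) (x, t)).hasFDerivAt.comp_hasDerivAt t h1

lemma NS.contDiff_pd {G : ℝ × ℝ → ℝ} (hG : ContDiff ℝ (⊤ : ℕ∞) G) (v : ℝ × ℝ) :
    ContDiff ℝ (⊤ : ℕ∞) fun p => fderiv ℝ G p v :=
  (hG.fderiv_right (by simp)).clm_apply contDiff_const

lemma NS.mixed_symm {G : ℝ × ℝ → ℝ} (hG : ContDiff ℝ (⊤ : ℕ∞) G) (q v w : ℝ × ℝ) :
    fderiv ℝ (fun p => fderiv ℝ G p v) q w = fderiv ℝ (fun p => fderiv ℝ G p w) q v := by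
  have hdG : ContDiff ℝ (⊤ : ℕ∞) (fderiv ℝ G) := hG.fderiv_right (by simp)
  have hD2 : HasFDerivAt (fderiv ℝ G) (fderiv ℝ (fderiv ℝ G) q) q :=
    (hdG.differentiable (by simp) q).hasFDerivAt
  have key : ∀ z : ℝ × ℝ, HasFDerivAt (fun p => fderiv ℝ G p z)
      ((ContinuousLinearMap.apply ℝ ℝ z).comp (fderiv ℝ (fderiv ℝ G) q)) q := fun z =>
    (ContinuousLinearMap.apply ℝ ℝ z).hasFDerivAt.comp q hD2
  have e1 : fderiv ℝ (fun p => fderiv ℝ G p v) q w = fderiv ℝ (fderiv ℝ G) q w v := by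
    rw [(key v).fderiv]; rfl
  have e2 : fderiv ℝ (fun p => fderiv ℝ G p w) q v = fderiv ℝ (fderiv ℝ G) q v w := by
    rw [(key w).fderiv]; rfl
  have hsymm := second_derivative_symmetric
    (fun y => (hG.differentiable (by simp) y).hasFDerivAt) hD2 v w
  rw [e1, e2, ← hsymm]

lemma NS.periodic_deriv (f : ℝ → ℝ) (c : ℝ) (h : Function.Periodic f c) :
    Function.Periodic (deriv f) c := fun x => by
  have : (fun y => f (y + c)) = f := funext fun y => h y
  rw [← deriv_comp_add_const, this]

/-- For smooth solutions on the torus of the pressureless Navier–Stokes system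
`ρ_t + (ρu)_x = 0`, `u_t + u u_x = ρ u_{xx} + 2 ρ_x u_x`, the quantity `f = u + ρ_x`
is transported, `f_t + u f_x = 0`, and thus `‖ρ_x(·,t)‖_∞ ≤ 2‖u(·,0)‖_∞ + ‖ρ_x(·,0)‖_∞`. -/
theorem ns_rho_x_bound
    (ρ u : ℝ → ℝ → ℝ)  -- arguments: (x, t); x-periodic models the torus 𝕋
    (T U0 R0 : ℝ) (hT : 0 < T)
    (hρ_smooth : ContDiff ℝ (⊤ : ℕ∞) (Function.uncurry ρ))
    (hu_smooth : ContDiff ℝ (⊤ : ℕ∞) (Function.uncurry u))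
    (hρ_per : ∀ t, Function.Periodic (fun x => ρ x t) (2 * Real.pi))
    (hu_per : ∀ t, Function.Periodic (fun x => u x t) (2 * Real.pi))
    (hmass : ∀ x t, t ∈ Set.Ico 0 T →
      deriv (fun τ => ρ x τ) t + deriv (fun y => ρ y t * u y t) x = 0)
    (hmom : ∀ x t, t ∈ Set.Ico 0 T →
      deriv (fun τ => u x τ) t + u x t * deriv (fun y => u y t) x
        = ρ x t * deriv (deriv (fun y => u y t)) x
          + 2 * deriv (fun y => ρ y t) x * deriv (fun y => u y t) x)
    (hU0 : ∀ x, |u x 0| ≤ U0)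
    (hR0 : ∀ x, |deriv (fun y => ρ y 0) x| ≤ R0)
    (hmaxprin : ∀ x t, t ∈ Set.Ico 0 T → |u x t| ≤ U0) :
    (∀ x t, t ∈ Set.Ico 0 T →
      deriv (fun τ => u x τ + deriv (fun y => ρ y τ) x) t
        + u x t * deriv (fun y => u y t + deriv (fun z => ρ z t) y) x = 0) ∧
    (∀ x t, t ∈ Set.Ico 0 T → |deriv (fun y => ρ y t) x| ≤ 2 * U0 + R0) := by
  -- partial derivative functions
  have hg_s : ContDiff ℝ (⊤ : ℕ∞) (fun p : ℝ × ℝ => fderiv ℝ (Function.uncurry ρ) p (1, 0)) :=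
    NS.contDiff_pd hρ_smooth _
  have hgu_s : ContDiff ℝ (⊤ : ℕ∞) (fun p : ℝ × ℝ => fderiv ℝ (Function.uncurry u) p (1, 0)) :=
    NS.contDiff_pd hu_smooth _
  have hgt_s : ContDiff ℝ (⊤ : ℕ∞) (fun p : ℝ × ℝ => fderiv ℝ (Function.uncurry ρ) p (0, 1)) :=
    NS.contDiff_pd hρ_smooth _
  have hf_s : ContDiff ℝ (⊤ : ℕ∞)
      (fun p : ℝ × ℝ => Function.uncurry u p + fderiv ℝ (Function.uncurry ρ) p (1, 0)) :=
    hu_smooth.add hg_s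
  -- slice derivative facts
  have hdρx : ∀ x t : ℝ, HasDerivAt (fun y => ρ y t)
      (fderiv ℝ (Function.uncurry ρ) (x, t) (1, 0)) x := fun x t => NS.slice1 hρ_smooth x t
  have hdux : ∀ x t : ℝ, HasDerivAt (fun y => u y t)
      (fderiv ℝ (Function.uncurry u) (x, t) (1, 0)) x := fun x t => NS.slice1 hu_smooth x t
  have hdut : ∀ x t : ℝ, HasDerivAt (fun τ => u x τ)
      (fderiv ℝ (Function.uncurry u) (x, t) (0, 1)) t := fun x t => NS.slice2 hu_smooth x t
  have hdρt : ∀ x t : ℝ, HasDerivAt (fun τ => ρ x τ)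
      (fderiv ℝ (Function.uncurry ρ) (x, t) (0, 1)) t := fun x t => NS.slice2 hρ_smooth x t
  have hρx_eq : ∀ x t : ℝ, deriv (fun y => ρ y t) x
      = fderiv ℝ (Function.uncurry ρ) (x, t) (1, 0) := fun x t => (hdρx x t).deriv
  have hux_eq : ∀ x t : ℝ, deriv (fun y => u y t) x
      = fderiv ℝ (Function.uncurry u) (x, t) (1, 0) := fun x t => (hdux x t).deriv
  have huxx_eq : ∀ x t : ℝ, deriv (deriv (fun y => u y t)) x
      = fderiv ℝ (fun p : ℝ × ℝ => fderiv ℝ (Function.uncurry u) p (1, 0)) (x, t) (1, 0) := by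
    intro x t
    have : deriv (fun y => u y t)
        = fun y => fderiv ℝ (Function.uncurry u) (y, t) (1, 0) := funext fun y => hux_eq y t
    rw [this]
    exact (NS.slice1 hgu_s x t).deriv
  -- the transport equation in fderiv form
  have Htrans : ∀ x t : ℝ, t ∈ Set.Ico 0 T →
      fderiv ℝ (fun p : ℝ × ℝ => Function.uncurry u p
          + fderiv ℝ (Function.uncurry ρ) p (1, 0)) (x, t) (0, 1)
        + u x t * fderiv ℝ (fun p : ℝ × ℝ => Function.uncurry u p
          + fderiv ℝ (Function.uncurry ρ) p (1, 0)) (x, t) (1, 0) = 0 := by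
    intro x t ht
    -- fderiv of the sum splits
    have hsplit : ∀ w : ℝ × ℝ,
        fderiv ℝ (fun p : ℝ × ℝ => Function.uncurry u p
          + fderiv ℝ (Function.uncurry ρ) p (1, 0)) (x, t) w
        = fderiv ℝ (Function.uncurry u) (x, t) w
          + fderiv ℝ (fun p : ℝ × ℝ => fderiv ℝ (Function.uncurry ρ) p (1, 0)) (x, t) w := by
      intro w
      rw [fderiv_fun_add (hu_smooth.differentiable (by simp) (x, t))
        (hg_s.differentiable (by simp) (x, t))]
      rfl
    -- mixed partials commute
    have hmix : fderiv ℝ (fun p : ℝ × ℝ => fderiv ℝ (Function.uncurry ρ) p (1, 0)) (x, t) (0, 1)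
        = fderiv ℝ (fun p : ℝ × ℝ => fderiv ℝ (Function.uncurry ρ) p (0, 1)) (x, t) (1, 0) :=
      NS.mixed_symm hρ_smooth (x, t) (1, 0) (0, 1)
    -- ρ_t = -(ρ u)_x as functions of the space variable
    have hmassfun : (fun y => fderiv ℝ (Function.uncurry ρ) (y, t) (0, 1))
        = fun y => -(fderiv ℝ (Function.uncurry ρ) (y, t) (1, 0) * u y t
            + ρ y t * fderiv ℝ (Function.uncurry u) (y, t) (1, 0)) := by
      funext y
      have h1 := hmass y t ht
      rw [(hdρt y t).deriv] at h1
      have h2 : deriv (fun z => ρ z t * u z t) y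
          = fderiv ℝ (Function.uncurry ρ) (y, t) (1, 0) * u y t
            + ρ y t * fderiv ℝ (Function.uncurry u) (y, t) (1, 0) :=
        ((hdρx y t).mul (hdux y t)).deriv
      rw [h2] at h1
      linarith
    -- compute ∂_x of ρ_t
    have hxρt : fderiv ℝ (fun p : ℝ × ℝ => fderiv ℝ (Function.uncurry ρ) p (0, 1)) (x, t) (1, 0)
        = -(fderiv ℝ (fun p : ℝ × ℝ => fderiv ℝ (Function.uncurry ρ) p (1, 0)) (x, t) (1, 0)
              * u x t
            + 2 * (fderiv ℝ (Function.uncurry ρ) (x, t) (1, 0)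
              * fderiv ℝ (Function.uncurry u) (x, t) (1, 0))
            + ρ x t
              * fderiv ℝ (fun p : ℝ × ℝ => fderiv ℝ (Function.uncurry u) p (1, 0)) (x, t)
                (1, 0)) := by
    -- derivative of the RHS of hmassfun
      have hA : HasDerivAt (fun y => fderiv ℝ (Function.uncurry ρ) (y, t) (1, 0))
          (fderiv ℝ (fun p : ℝ × ℝ => fderiv ℝ (Function.uncurry ρ) p (1, 0)) (x, t) (1, 0)) x :=
        NS.slice1 hg_s x t
      have hB : HasDerivAt (fun y => fderiv ℝ (Function.uncurry u) (y, t) (1, 0))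
          (fderiv ℝ (fun p : ℝ × ℝ => fderiv ℝ (Function.uncurry u) p (1, 0)) (x, t) (1, 0)) x :=
        NS.slice1 hgu_s x t
      have hC : HasDerivAt
          (fun y => -(fderiv ℝ (Function.uncurry ρ) (y, t) (1, 0) * u y t
            + ρ y t * fderiv ℝ (Function.uncurry u) (y, t) (1, 0)))
          (-((fderiv ℝ (fun p : ℝ × ℝ => fderiv ℝ (Function.uncurry ρ) p (1, 0)) (x, t) (1, 0)
                * u x t
              + fderiv ℝ (Function.uncurry ρ) (x, t) (1, 0)
                * fderiv ℝ (Function.uncurry u) (x, t) (1, 0))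
            + (fderiv ℝ (Function.uncurry ρ) (x, t) (1, 0)
                * fderiv ℝ (Function.uncurry u) (x, t) (1, 0)
              + ρ x t
                * fderiv ℝ (fun p : ℝ × ℝ => fderiv ℝ (Function.uncurry u) p (1, 0)) (x, t)
                  (1, 0)))) x :=
        ((hA.mul (hdux x t)).add ((hdρx x t).mul hB)).neg
      have hD : HasDerivAt (fun y => fderiv ℝ (Function.uncurry ρ) (y, t) (0, 1))
          (fderiv ℝ (fun p : ℝ × ℝ => fderiv ℝ (Function.uncurry ρ) p (0, 1)) (x, t) (1, 0)) x :=
        NS.slice1 hgt_s x t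
      rw [hmassfun] at hD
      have := hD.unique hC
      rw [this]; ring
    -- momentum equation in fderiv form
    have hmom' := hmom x t ht
    rw [(hdut x t).deriv, hux_eq, hρx_eq, huxx_eq] at hmom'
    rw [hsplit (0, 1), hsplit (1, 0), hmix, hxρt]
    have hux_goal : fderiv ℝ (Function.uncurry u) (x, t) (1, 0) = deriv (fun y => u y t) x :=
      (hux_eq x t).symm
    linarith
  constructor
  · -- part 1
    intro x t ht
    have e1 : (fun τ => u x τ + deriv (fun y => ρ y τ) x)
        = fun τ => Function.uncurry u (x, τ)
            + fderiv ℝ (Function.uncurry ρ) (x, τ) (1, 0) := by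
      funext τ; rw [hρx_eq]; rfl
    have e2 : (fun y => u y t + deriv (fun z => ρ z t) y)
        = fun y => Function.uncurry u (y, t)
            + fderiv ℝ (Function.uncurry ρ) (y, t) (1, 0) := by
      funext y; rw [hρx_eq]; rfl
    have d1 : deriv (fun τ => u x τ + deriv (fun y => ρ y τ) x) t
        = fderiv ℝ (fun p : ℝ × ℝ => Function.uncurry u p
            + fderiv ℝ (Function.uncurry ρ) p (1, 0)) (x, t) (0, 1) := by
      rw [e1]; exact (NS.slice2 hf_s x t).deriv
    have d2 : deriv (fun y => u y t + deriv (fun z => ρ z t) y) x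
        = fderiv ℝ (fun p : ℝ × ℝ => Function.uncurry u p
            + fderiv ℝ (Function.uncurry ρ) p (1, 0)) (x, t) (1, 0) := by
      rw [e2]; exact (NS.slice1 hf_s x t).deriv
    rw [d1, d2]
    exact Htrans x t ht
  · -- part 2
    intro x₀ t ht
    obtain ⟨ht0, htT⟩ := ht
    have hU0nn : 0 ≤ U0 := le_trans (abs_nonneg _) (hU0 0)
    -- uniform bound on u_x on ℝ × [0, t], via periodicity and compactness
    obtain ⟨M, hM⟩ := (isCompact_Icc.prod isCompact_Icc :
        IsCompact (Icc (0 : ℝ) (2 * Real.pi) ×ˢ Icc (0 : ℝ) t)).exists_bound_of_continuousOn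
      hgu_s.continuous.continuousOn
    set M' := max M 0 with hM'def
    have hM'0 : (0 : ℝ) ≤ M' := le_max_right _ _
    have hgu_per : ∀ s : ℝ, Function.Periodic
        (fun y => fderiv ℝ (Function.uncurry u) (y, s) (1, 0)) (2 * Real.pi) := by
      intro s
      have e : (fun y => fderiv ℝ (Function.uncurry u) (y, s) (1, 0))
          = deriv (fun y => u y s) := funext fun y => ((hdux y s).deriv).symm
      rw [e]
      exact NS.periodic_deriv _ _ (hu_per s)
    have hgu_bdd : ∀ s ∈ Icc (0 : ℝ) t, ∀ y : ℝ,
        |fderiv ℝ (Function.uncurry u) (y, s) (1, 0)| ≤ M' := by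
      intro s hs y
      obtain ⟨y', hy', hval⟩ := (hgu_per s).exists_mem_Ico₀ Real.two_pi_pos y
      rw [hval]
      have h1 := hM (y', s) ⟨⟨hy'.1, le_of_lt hy'.2⟩, hs⟩
      rw [Real.norm_eq_abs] at h1
      exact le_trans h1 (le_max_left _ _)
    have hLip : ∀ s ∈ Icc (0 : ℝ) t, LipschitzWith M'.toNNReal (fun y => u y s) := by
      intro s hs
      apply lipschitzWith_of_nnnorm_deriv_le (fun y => (hdux y s).differentiableAt)
      intro y
      rw [(hdux y s).deriv, ← NNReal.coe_le_coe, coe_nnnorm,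
        Real.coe_toNNReal _ hM'0, Real.norm_eq_abs]
      exact hgu_bdd s hs y
    -- Picard–Lindelöf: backwards characteristic through (x₀, t)
    have hPL : IsPicardLindelof (fun s y => u y s) (tmin := 0) (tmax := t) ⟨t, ht0, le_rfl⟩ x₀
        (U0 * t).toNNReal 0 U0.toNNReal M'.toNNReal :=
      { lipschitzOnWith := fun s hs => (hLip s hs).lipschitzOnWith
        continuousOn := fun y _ =>
          (hu_smooth.continuous.comp (Continuous.prodMk_right y)).continuousOn
        norm_le := fun s hs y _ => by
          rw [Real.norm_eq_abs, Real.coe_toNNReal _ hU0nn]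
          exact hmaxprin y s ⟨hs.1, lt_of_le_of_lt hs.2 htT⟩
        mul_max_le := by
          simp [Real.coe_toNNReal _ hU0nn, Real.coe_toNNReal _ (mul_nonneg hU0nn ht0),
            max_eq_right ht0] }
    obtain ⟨γ, hγt, hγ'⟩ := hPL.exists_eq_forall_mem_Icc_hasDerivWithinAt₀
    have hγt : γ t = x₀ := hγt
    have hγcont : ContinuousOn γ (Icc 0 t) := fun s hs => (hγ' s hs).continuousWithinAt
    -- f = u + ρ_x is constant along the characteristic
    have hcont : ContinuousOn (fun s => Function.uncurry u (γ s, s)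
        + fderiv ℝ (Function.uncurry ρ) (γ s, s) (1, 0)) (Icc 0 t) :=
      hf_s.continuous.comp_continuousOn (hγcont.prodMk continuousOn_id)
    have hderiv : ∀ s ∈ Ico (0 : ℝ) t, HasDerivWithinAt
        (fun s' => Function.uncurry u (γ s', s')
          + fderiv ℝ (Function.uncurry ρ) (γ s', s') (1, 0)) 0 (Ici s) s := by
      intro s hs
      have hsI : s ∈ Icc (0 : ℝ) t := ⟨hs.1, le_of_lt hs.2⟩
      have hsT : s ∈ Ico (0 : ℝ) T := ⟨hs.1, lt_trans hs.2 htT⟩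
      have hpr : HasDerivWithinAt (fun s' => (γ s', s')) ((u (γ s) s, 1) : ℝ × ℝ)
          (Icc 0 t) s := (hγ' s hsI).prodMk (hasDerivWithinAt_id s _)
      have hfd : HasFDerivAt (fun p : ℝ × ℝ => Function.uncurry u p
            + fderiv ℝ (Function.uncurry ρ) p (1, 0))
          (fderiv ℝ (fun p : ℝ × ℝ => Function.uncurry u p
            + fderiv ℝ (Function.uncurry ρ) p (1, 0)) (γ s, s)) (γ s, s) :=
        (hf_s.differentiable (by simp) _).hasFDerivAt
      have hcomp : HasDerivWithinAt
          (fun s' => Function.uncurry u (γ s', s')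
            + fderiv ℝ (Function.uncurry ρ) (γ s', s') (1, 0))
          (fderiv ℝ (fun p : ℝ × ℝ => Function.uncurry u p
            + fderiv ℝ (Function.uncurry ρ) p (1, 0)) (γ s, s) ((u (γ s) s, 1) : ℝ × ℝ))
          (Icc 0 t) s := HasFDerivAt.comp_hasDerivWithinAt (f := fun s' => (γ s', s')) s hfd hpr
      have hval : fderiv ℝ (fun p : ℝ × ℝ => Function.uncurry u p
          + fderiv ℝ (Function.uncurry ρ) p (1, 0)) (γ s, s) ((u (γ s) s, 1) : ℝ × ℝ) = 0 := by
        have hlin : ((u (γ s) s, (1 : ℝ)) : ℝ × ℝ)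
            = u (γ s) s • ((1 : ℝ), (0 : ℝ)) + ((0 : ℝ), (1 : ℝ)) := by
          simp [Prod.ext_iff]
        rw [hlin, map_add, map_smul]
        have := Htrans (γ s) s hsT
        simp only [smul_eq_mul]
        linarith
      rw [hval] at hcomp
      have hmem : Icc (0 : ℝ) t ∈ nhdsWithin s (Ici s) := by
        have h1 : Iic t ∈ nhds s := Iic_mem_nhds hs.2
        refine Filter.mem_of_superset
          (Filter.inter_mem (mem_nhdsWithin_of_mem_nhds h1) self_mem_nhdsWithin) ?_
        rintro z ⟨hz1, hz2⟩
        exact ⟨le_trans hs.1 hz2, hz1⟩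
      exact hcomp.mono_of_mem_nhdsWithin hmem
    have hconst := constant_of_has_deriv_right_zero hcont hderiv
    have hend := hconst t (right_mem_Icc.mpr ht0)
    rw [hγt] at hend
    -- bound at time 0
    have hf0 : |Function.uncurry u (γ 0, 0)
        + fderiv ℝ (Function.uncurry ρ) (γ 0, 0) (1, 0)| ≤ U0 + R0 := by
      have h1 : |u (γ 0) 0| ≤ U0 := hU0 (γ 0)
      have h2 : |fderiv ℝ (Function.uncurry ρ) (γ 0, 0) (1, 0)| ≤ R0 := by
        rw [← hρx_eq]
        exact hR0 (γ 0)
      calc |Function.uncurry u (γ 0, 0) + fderiv ℝ (Function.uncurry ρ) (γ 0, 0) (1, 0)|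
          ≤ |Function.uncurry u (γ 0, 0)|
            + |fderiv ℝ (Function.uncurry ρ) (γ 0, 0) (1, 0)| := abs_add_le _ _
        _ ≤ U0 + R0 := add_le_add h1 h2
    -- conclude
    have hkey : u x₀ t + fderiv ℝ (Function.uncurry ρ) (x₀, t) (1, 0)
        = Function.uncurry u (γ 0, 0)
          + fderiv ℝ (Function.uncurry ρ) (γ 0, 0) (1, 0) := hend
    have hum : |u x₀ t| ≤ U0 := hmaxprin x₀ t ⟨ht0, htT⟩
    rw [hρx_eq x₀ t]
    have h3 : fderiv ℝ (Function.uncurry ρ) (x₀, t) (1, 0)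
        = (Function.uncurry u (γ 0, 0)
            + fderiv ℝ (Function.uncurry ρ) (γ 0, 0) (1, 0)) - u x₀ t := by linarith
    rw [h3]
    have h4 := abs_add_le (Function.uncurry u (γ 0, 0)
        + fderiv ℝ (Function.uncurry ρ) (γ 0, 0) (1, 0)) (-(u x₀ t))
    rw [abs_neg] at h4
    rw [sub_eq_add_neg]
    linarith
end

section
/- For smooth f : 𝕋 → ℝ and integers 1 ≤ i ≤ n, the Gagliardo–Nirenberg interpolation inequality ‖∂^i f‖_{L^{2n/i}} ≤ C ‖f‖_∞^{1−i/n} ‖f‖_{H^n}^{i/n} holds with C independent of f. -/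
open MeasureTheory Finset Filter intervalIntegral
open scoped ContDiff Topology ENNReal

namespace GNtorus

/-- derivative of a periodic function is periodic -/
lemma periodic_deriv' {f : ℝ → ℝ} {c : ℝ} (h : Function.Periodic f c) :
    Function.Periodic (deriv f) c := by
  intro x
  have : (fun y => f (y + c)) = f := funext h
  calc deriv f (x + c) = deriv (fun y => f (y + c)) x := (deriv_comp_add_const f c x).symm
    _ = deriv f x := by rw [this]

lemma periodic_iteratedDeriv {f : ℝ → ℝ} {c : ℝ} (h : Function.Periodic f c) (j : ℕ) :
    Function.Periodic (iteratedDeriv j f) c := by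
  induction j with
  | zero => simpa [iteratedDeriv_zero] using h
  | succ k ih => rw [iteratedDeriv_succ]; exact periodic_deriv' ih

lemma contDiff_iteratedDeriv' {f : ℝ → ℝ} (hf : ContDiff ℝ ∞ f) (j : ℕ) :
    ContDiff ℝ ∞ (iteratedDeriv j f) := by
  rw [iteratedDeriv_eq_iterate]
  exact hf.iterate_deriv j

lemma hasDerivAt_iteratedDeriv {f : ℝ → ℝ} (hf : ContDiff ℝ ∞ f) (j : ℕ) (x : ℝ) :
    HasDerivAt (iteratedDeriv j f) (iteratedDeriv (j + 1) f x) x := by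
  rw [iteratedDeriv_succ]
  exact ((contDiff_iteratedDeriv' hf j).differentiable (by simp)).differentiableAt.hasDerivAt

lemma continuous_iteratedDeriv {f : ℝ → ℝ} (hf : ContDiff ℝ ∞ f) (j : ℕ) :
    Continuous (iteratedDeriv j f) :=
  (contDiff_iteratedDeriv' hf j).continuous


lemma hasDerivAt_Phi {p : ℝ} (hp : 2 < p) (y : ℝ) :
    HasDerivAt (fun z : ℝ => |z| ^ (p - 2) * z) ((p - 1) * |y| ^ (p - 2)) y := by
  rcases lt_trichotomy y 0 with hy | hy | hy
  · -- y < 0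
    have hne : -y ≠ 0 := neg_ne_zero.mpr (ne_of_lt hy)
    have h1 : HasDerivAt (fun z : ℝ => (-z) ^ (p - 2)) (-((p - 2) * (-y) ^ (p - 2 - 1))) y := by
      have := (Real.hasDerivAt_rpow_const (p := p - 2) (Or.inl hne)).comp y (hasDerivAt_neg y)
      simpa [Function.comp_def] using this
    have h2 : HasDerivAt (fun z : ℝ => (-z) ^ (p - 2) * z)
        ((-((p - 2) * (-y) ^ (p - 2 - 1))) * y + (-y) ^ (p - 2) * 1) y :=
      h1.mul (hasDerivAt_id y)
    have heq : (-((p - 2) * (-y) ^ (p - 2 - 1))) * y + (-y) ^ (p - 2) * 1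
        = (p - 1) * |y| ^ (p - 2) := by
      rw [abs_of_neg hy]
      have h3 : (-y) ^ (p - 2 - 1) * (-y) = (-y) ^ (p - 2) := by
        rw [← Real.rpow_add_one hne]; ring_nf
      calc (-((p - 2) * (-y) ^ (p - 2 - 1))) * y + (-y) ^ (p - 2) * 1
          = (p - 2) * ((-y) ^ (p - 2 - 1) * (-y)) + (-y) ^ (p - 2) := by ring
        _ = (p - 2) * (-y) ^ (p - 2) + (-y) ^ (p - 2) := by rw [h3]
        _ = (p - 1) * (-y) ^ (p - 2) := by ring
    refine (heq ▸ h2).congr_of_eventuallyEq ?_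
    filter_upwards [eventually_lt_nhds hy] with z hz
    rw [abs_of_neg hz]
  · -- y = 0
    subst hy
    have h0 : (p - 1) * |(0:ℝ)| ^ (p - 2) = 0 := by
      rw [abs_zero, Real.zero_rpow (by linarith)]; ring
    rw [h0, hasDerivAt_iff_tendsto_slope]
    have hcont : Tendsto (fun z : ℝ => |z| ^ (p - 2)) (𝓝 0) (𝓝 0) := by
      have h := ((Real.continuousAt_rpow_const |(0:ℝ)| (p - 2)
        (Or.inr (by linarith))).comp continuous_abs.continuousAt (x := (0:ℝ)))
      have h' := h.tendsto
      simp only [Function.comp, abs_zero, Real.zero_rpow (show p - 2 ≠ 0 by linarith)] at h'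
      exact h'
    refine (hcont.mono_left nhdsWithin_le_nhds).congr' ?_
    filter_upwards [self_mem_nhdsWithin] with z hz
    have hz' : z ≠ 0 := hz
    rw [slope_def_field]
    field_simp
    simp
  · -- 0 < y
    have hne : y ≠ 0 := ne_of_gt hy
    have h1 : HasDerivAt (fun z : ℝ => z ^ (p - 2)) ((p - 2) * y ^ (p - 2 - 1)) y :=
      Real.hasDerivAt_rpow_const (Or.inl hne)
    have h2 : HasDerivAt (fun z : ℝ => z ^ (p - 2) * z)
        (((p - 2) * y ^ (p - 2 - 1)) * y + y ^ (p - 2) * 1) y := h1.mul (hasDerivAt_id y)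
    have heq : ((p - 2) * y ^ (p - 2 - 1)) * y + y ^ (p - 2) * 1 = (p - 1) * |y| ^ (p - 2) := by
      rw [abs_of_pos hy]
      have h3 : y ^ (p - 2 - 1) * y = y ^ (p - 2) := by
        rw [← Real.rpow_add_one hne]; ring_nf
      calc ((p - 2) * y ^ (p - 2 - 1)) * y + y ^ (p - 2) * 1
          = (p - 2) * (y ^ (p - 2 - 1) * y) + y ^ (p - 2) := by ring
        _ = (p - 1) * y ^ (p - 2) := by rw [h3]; ring
    refine (heq ▸ h2).congr_of_eventuallyEq ?_
    filter_upwards [eventually_gt_nhds hy] with z hz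
    rw [abs_of_pos hz]


lemma abs_rpow_self_mul {p : ℝ} (hp : 2 < p) (y : ℝ) :
    |y| ^ (p - 2) * y * y = |y| ^ p := by
  rcases eq_or_ne y 0 with hy | hy
  · subst hy
    rw [abs_zero, Real.zero_rpow (by linarith), Real.zero_rpow (by linarith)]
    ring
  · have hy' : 0 < |y| := abs_pos.mpr hy
    calc |y| ^ (p - 2) * y * y = |y| ^ (p - 2) * (|y| * |y|) := by
          rw [mul_assoc, ← abs_mul_self y, abs_mul]
      _ = |y| ^ (p - 2) * (|y| ^ (1:ℝ) * |y| ^ (1:ℝ)) := by rw [Real.rpow_one]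
      _ = |y| ^ (p - 2 + (1 + 1)) := by
          rw [← Real.rpow_add hy', ← Real.rpow_add hy']
      _ = |y| ^ p := by norm_num
  
/-- Integration by parts estimate. -/
lemma ibp_estimate {f : ℝ → ℝ} (hf : ContDiff ℝ ∞ f)
    (hper : Function.Periodic f (2 * Real.pi)) {p : ℝ} (hp : 2 < p) (m : ℕ) :
    ∫ x in (0:ℝ)..(2 * Real.pi), |iteratedDeriv (m + 1) f x| ^ p
      ≤ (p - 1) * ∫ x in (0:ℝ)..(2 * Real.pi),
          |iteratedDeriv m f x| * (|iteratedDeriv (m + 1) f x| ^ (p - 2)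
            * |iteratedDeriv (m + 2) f x|) := by
  set T : ℝ := 2 * Real.pi with hT
  have hT0 : (0:ℝ) ≤ T := by positivity
  set g : ℝ → ℝ := iteratedDeriv (m + 1) f with hg
  set v : ℝ → ℝ := iteratedDeriv m f with hv
  set w : ℝ → ℝ := iteratedDeriv (m + 2) f with hw
  have hgc : Continuous g := continuous_iteratedDeriv hf (m + 1)
  have hvc : Continuous v := continuous_iteratedDeriv hf m
  have hwc : Continuous w := continuous_iteratedDeriv hf (m + 2)
  set u : ℝ → ℝ := fun x => |g x| ^ (p - 2) * g x with hu
  set u' : ℝ → ℝ := fun x => ((p - 1) * |g x| ^ (p - 2)) * w x with hu'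
  have huderiv : ∀ x, HasDerivAt u (u' x) x := by
    intro x
    have h1 := (hasDerivAt_Phi hp (g x)).comp x (hasDerivAt_iteratedDeriv hf (m + 1) x)
    simpa [hu, hu', Function.comp_def] using h1
  have hu'c : Continuous u' := by
    apply Continuous.mul
    · exact continuous_const.mul (hgc.abs.rpow_const fun x => Or.inr (by linarith))
    · exact hwc
  have hvderiv : ∀ x, HasDerivAt v (g x) x := fun x => hasDerivAt_iteratedDeriv hf m x
  have hibp := integral_mul_deriv_eq_deriv_mul
    (u := u) (v := v) (u' := u') (v' := g) (a := 0) (b := T)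
    (fun x _ => huderiv x) (fun x _ => hvderiv x)
    (hu'c.intervalIntegrable 0 T) (hgc.intervalIntegrable 0 T)
  -- boundary terms vanish
  have hgp : g T = g 0 := by
    have := periodic_iteratedDeriv hper (m + 1) 0
    simpa [hT] using this
  have hvp : v T = v 0 := by
    have := periodic_iteratedDeriv hper m 0
    simpa [hT] using this
  have hbdry : u T * v T - u 0 * v 0 = 0 := by
    simp [hu, hgp, hvp]
  have hLHS : ∫ x in (0:ℝ)..T, u x * g x = ∫ x in (0:ℝ)..T, |g x| ^ p :=
    intervalIntegral.integral_congr fun x _ => abs_rpow_self_mul hp (g x)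
  rw [hLHS, hbdry, zero_sub] at hibp
  rw [hibp]
  have hmono : ∫ x in (0:ℝ)..T, -(u' x * v x)
      ≤ ∫ x in (0:ℝ)..T, (p - 1) * (|v x| * (|g x| ^ (p - 2) * |w x|)) := by
    apply intervalIntegral.integral_mono_on hT0
    · exact ((hu'c.mul hvc).neg).intervalIntegrable 0 T
    · exact (continuous_const.mul (hvc.abs.mul
        ((hgc.abs.rpow_const fun x => Or.inr (by linarith)).mul hwc.abs))).intervalIntegrable 0 T
    · intro x _
      calc -(u' x * v x) ≤ |u' x * v x| := neg_le_abs _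
        _ = (p - 1) * (|v x| * (|g x| ^ (p - 2) * |w x|)) := by
            simp only [hu', abs_mul, abs_abs]
            rw [abs_of_nonneg (by linarith : (0:ℝ) ≤ p - 1),
              abs_of_nonneg (Real.rpow_nonneg (abs_nonneg (g x)) _)]
            ring
  rw [intervalIntegral.integral_neg, intervalIntegral.integral_const_mul] at hmono
  exact hmono


lemma chain_lemma {n : ℕ} (hn : 1 ≤ n) {K : ℝ} (hK : 1 ≤ K) {a : ℕ → ℝ}
    (hpos : ∀ j, j ≤ n → 0 < a j)
    (hrec : ∀ m : ℕ, m + 2 ≤ n → a (m + 1) ^ 2 ≤ K * (a m * a (m + 2))) :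
    ∀ i, 1 ≤ i → i ≤ n →
      a i ≤ K ^ (n ^ 2) * (a 0 ^ (1 - (i : ℝ) / n) * a n ^ ((i : ℝ) / n)) := by
  intro i hi1 hin
  have hK0 : 0 < K := lt_of_lt_of_le one_pos hK
  have hlogK : 0 ≤ Real.log K := Real.log_nonneg hK
  set L : ℕ → ℝ := fun j => Real.log (a j) with hL
  set D : ℕ → ℝ := fun k => L (k + 1) - L k with hD
  -- basic step: D m ≤ log K + D (m+1) for m + 2 ≤ n
  have hstep : ∀ m : ℕ, m + 2 ≤ n → D m ≤ Real.log K + D (m + 1) := by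
    intro m hm
    have h1 := hrec m hm
    have hp0 : 0 < a m := hpos m (by omega)
    have hp1 : 0 < a (m + 1) := hpos (m + 1) (by omega)
    have hp2 : 0 < a (m + 2) := hpos (m + 2) (by omega)
    have hlog := Real.log_le_log (by positivity) h1
    rw [Real.log_pow, Real.log_mul (ne_of_gt hK0) (by positivity),
      Real.log_mul (ne_of_gt hp0) (ne_of_gt hp2)] at hlog
    simp only [hD, hL]
    push_cast at hlog
    linarith
  -- D k ≤ d * log K + D (k + d) whenever k + d + 1 ≤ n
  have hmono : ∀ d k : ℕ, k + d + 1 ≤ n → D k ≤ d * Real.log K + D (k + d) := by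
    intro d
    induction d with
    | zero => intro k _; simp
    | succ e ih =>
      intro k hk
      have h1 : D k ≤ e * Real.log K + D (k + e) := ih k (by omega)
      have h2 : D (k + e) ≤ Real.log K + D (k + e + 1) := hstep (k + e) (by omega)
      have : (k + (e+1) : ℕ) = k + e + 1 := by omega
      rw [this]
      push_cast
      linarith
  -- hence for k < i ≤ l < n : D k ≤ n * log K + D l
  have hcompare : ∀ k l : ℕ, k < i → l ∈ Ico i n → D k ≤ n * Real.log K + D l := by
    intro k l hk hl
    rw [mem_Ico] at hl
    have h1 := hmono (l - k) k (by omega)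
    have h2 : k + (l - k) = l := by omega
    rw [h2] at h1
    have h3 : ((l - k : ℕ) : ℝ) ≤ (n : ℝ) := by exact_mod_cast Nat.le_of_lt_succ (by omega)
    nlinarith
  -- sums
  have hS1 : ∑ k ∈ range i, D k = L i - L 0 := Finset.sum_range_sub L i
  have hSn : ∑ k ∈ range n, D k = L n - L 0 := Finset.sum_range_sub L n
  have hsplit : ∑ k ∈ range i, D k + ∑ k ∈ Ico i n, D k = ∑ k ∈ range n, D k := by
    rw [range_eq_Ico, range_eq_Ico]
    exact Finset.sum_Ico_consecutive D (Nat.zero_le i) hin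
  have hS2 : ∑ k ∈ Ico i n, D k = L n - L i := by
    have := hsplit
    rw [hS1, hSn] at this
    linarith
  -- key sum inequality
  have hkey : ((n : ℝ) - i) * (L i - L 0) ≤ (n:ℝ)^3 * Real.log K + i * (L n - L i) := by
    have hbound : ∀ l ∈ Ico i n, ∑ k ∈ range i, D k ≤ i * ((n:ℝ) * Real.log K) + i * D l := by
      intro l hl
      calc ∑ k ∈ range i, D k ≤ ∑ k ∈ range i, ((n:ℝ) * Real.log K + D l) :=
            Finset.sum_le_sum (fun k hk => hcompare k l (mem_range.mp hk) hl)
        _ = i * ((n:ℝ) * Real.log K + D l) := by rw [Finset.sum_const, card_range]; push_cast; ring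
        _ = i * ((n:ℝ) * Real.log K) + i * D l := by ring
    have hsum : ∑ _l ∈ Ico i n, (∑ k ∈ range i, D k)
        ≤ ∑ l ∈ Ico i n, (i * ((n:ℝ) * Real.log K) + i * D l) :=
      Finset.sum_le_sum hbound
    rw [Finset.sum_const, Nat.card_Ico, Finset.sum_add_distrib, Finset.sum_const,
      Nat.card_Ico, ← Finset.mul_sum, hS1, hS2] at hsum
    simp only [nsmul_eq_mul] at hsum
    have hc : ((n - i : ℕ) : ℝ) = (n : ℝ) - i := by
      rw [Nat.cast_sub hin]
    rw [hc] at hsum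
    have h1 : ((n:ℝ) - i) * (i * ((n:ℝ) * Real.log K)) ≤ (n:ℝ)^3 * Real.log K := by
      have hni : (0:ℝ) ≤ (n:ℝ) - i := by
        have : (i:ℝ) ≤ n := by exact_mod_cast hin
        linarith
      have hi0 : (0:ℝ) ≤ (i:ℝ) := by positivity
      have hin' : (i:ℝ) ≤ n := by exact_mod_cast hin
      have hn0 : (0:ℝ) ≤ (n:ℝ) := by positivity
      have hcoef : ((n:ℝ) - i) * i * n ≤ (n:ℝ)^3 := by
        have t1 : ((n:ℝ)-i)*i ≤ (n:ℝ)*n := mul_le_mul (by linarith) hin' hi0 hn0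
        have t2 : ((n:ℝ)-i)*i*n ≤ (n:ℝ)*n*n := mul_le_mul_of_nonneg_right t1 hn0
        have t3 : (n:ℝ)^3 = (n:ℝ)*n*n := by ring
        linarith
      calc ((n:ℝ) - i) * (i * ((n:ℝ) * Real.log K))
          = (((n:ℝ) - i) * i * n) * Real.log K := by ring
        _ ≤ (n:ℝ)^3 * Real.log K := mul_le_mul_of_nonneg_right hcoef hlogK
    linarith
  -- conclude for logs
  have hn0 : (0:ℝ) < n := by exact_mod_cast hn
  have hlogtarget : L i ≤ (n:ℝ)^2 * Real.log K + ((1 - (i:ℝ)/n) * L 0 + ((i:ℝ)/n) * L n) := by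
    have hin' : (i:ℝ) ≤ n := by exact_mod_cast hin
    have h2 : (n:ℝ) * L i ≤ (n:ℝ)^3 * Real.log K + ((n:ℝ) - i) * L 0 + i * L n := by
      nlinarith [hkey]
    have h3 : (n:ℝ)^3 * Real.log K ≤ (n:ℝ) * ((n:ℝ)^2 * Real.log K) := by nlinarith
    rw [← sub_nonneg]
    have expand : (n:ℝ)^2 * Real.log K + ((1 - (i:ℝ)/n) * L 0 + ((i:ℝ)/n) * L n) - L i
        = ((n:ℝ) * ((n:ℝ)^2 * Real.log K) + (((n:ℝ) - i) * L 0 + i * L n) - (n:ℝ) * L i) / n := by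
      field_simp
    rw [expand]
    apply div_nonneg _ (le_of_lt hn0)
    linarith
  -- exponentiate
  have hai : 0 < a i := hpos i hin
  have ha0 : 0 < a 0 := hpos 0 (by omega)
  have han : 0 < a n := hpos n le_rfl
  calc a i = Real.exp (L i) := (Real.exp_log hai).symm
    _ ≤ Real.exp ((n:ℝ)^2 * Real.log K + ((1 - (i:ℝ)/n) * L 0 + ((i:ℝ)/n) * L n)) :=
        Real.exp_le_exp.mpr hlogtarget
    _ = K ^ (n ^ 2) * (a 0 ^ (1 - (i : ℝ) / n) * a n ^ ((i : ℝ) / n)) := by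
        rw [Real.exp_add, Real.exp_add]
        congr 1
        · rw [show ((n:ℝ)^2) = ((n^2 : ℕ) : ℝ) by push_cast; ring, ← Real.log_pow,
            Real.exp_log (by positivity)]
        · congr 1
          · rw [Real.rpow_def_of_pos ha0]; ring_nf; rfl
          · rw [Real.rpow_def_of_pos han]; ring_nf; rfl


lemma memLp_of_bdd {μ : Measure ℝ} [IsFiniteMeasure μ] {F : ℝ → ℝ} (hF : Continuous F)
    {M : ℝ} (hM : ∀ x, |F x| ≤ M) (q : ℝ≥0∞) : MemLp F q μ :=
  MemLp.of_bound hF.aestronglyMeasurable M (ae_of_all _ fun x => by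
    simpa [Real.norm_eq_abs] using hM x)

/-- two-factor Hölder for bounded continuous nonneg functions -/
lemma holder2 {μ : Measure ℝ} [IsFiniteMeasure μ] {u v : ℝ → ℝ}
    (hu : Continuous u) (hv : Continuous v)
    {Mu Mv : ℝ} (hMu : ∀ x, |u x| ≤ Mu) (hMv : ∀ x, |v x| ≤ Mv)
    (hu0 : ∀ x, 0 ≤ u x) (hv0 : ∀ x, 0 ≤ v x)
    {p q : ℝ} (hpq : p.HolderConjugate q) :
    ∫ x, u x * v x ∂μ ≤ (∫ x, u x ^ p ∂μ) ^ (1/p) * (∫ x, v x ^ q ∂μ) ^ (1/q) :=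
  integral_mul_le_Lp_mul_Lq_of_nonneg hpq (ae_of_all _ hu0) (ae_of_all _ hv0)
    (memLp_of_bdd hu hMu _) (memLp_of_bdd hv hMv _)

/-- three-factor Hölder for bounded continuous nonneg functions -/
lemma holder3 {μ : Measure ℝ} [IsFiniteMeasure μ] {u v w : ℝ → ℝ}
    (hu : Continuous u) (hv : Continuous v) (hw : Continuous w)
    {Mu Mv Mw : ℝ} (hMu : ∀ x, |u x| ≤ Mu) (hMv : ∀ x, |v x| ≤ Mv) (hMw : ∀ x, |w x| ≤ Mw)
    (hu0 : ∀ x, 0 ≤ u x) (hv0 : ∀ x, 0 ≤ v x) (hw0 : ∀ x, 0 ≤ w x)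
    {r1 r2 r3 : ℝ} (h1 : 1 < r1) (h2 : 1 < r2) (h3 : 1 < r3)
    (hsum : 1/r1 + 1/r2 + 1/r3 = 1) :
    ∫ x, u x * (v x * w x) ∂μ
      ≤ (∫ x, u x ^ r1 ∂μ) ^ (1/r1)
        * ((∫ x, v x ^ r2 ∂μ) ^ (1/r2) * (∫ x, w x ^ r3 ∂μ) ^ (1/r3)) := by
  have hr1 : 0 < r1 := lt_trans one_pos h1
  have hr2 : 0 < r2 := lt_trans one_pos h2
  have hr3 : 0 < r3 := lt_trans one_pos h3
  set s : ℝ := (1 - 1/r1)⁻¹ with hs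
  have hs1 : 1/s = 1/r2 + 1/r3 := by
    rw [hs, one_div, inv_inv]; linarith
  have hspos : 0 < s := by
    rw [hs]; apply inv_pos.mpr; have : 1/r1 < 1 := by
      rw [div_lt_one hr1]; exact h1
    linarith
  have hsne : s ≠ 0 := ne_of_gt hspos
  have hconj1 : r1.HolderConjugate s := by
    rw [Real.holderConjugate_iff]; constructor
    · exact h1
    · rw [← one_div, ← one_div, hs1]; linarith
  have hconj2 : (r2/s).HolderConjugate (r3/s) := by
    have hr3' : 0 < 1/r3 := by positivity
    have h12 : 1/r2 < 1/s := by rw [hs1]; linarith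
    have hlt : s < r2 := by
      by_contra hcon
      push_neg at hcon
      have := one_div_le_one_div_of_le hr2 hcon
      linarith
    refine Real.holderConjugate_iff.mpr ⟨(one_lt_div hspos).mpr hlt, ?_⟩
    rw [inv_div, inv_div]
    have hrr : s/r2 + s/r3 = s * (1/r2 + 1/r3) := by ring
    rw [hrr, ← hs1, mul_one_div, div_self hsne]
  -- first Hölder application
  have step1 : ∫ x, u x * (v x * w x) ∂μ
      ≤ (∫ x, u x ^ r1 ∂μ) ^ (1/r1) * (∫ x, (v x * w x) ^ s ∂μ) ^ (1/s) := by
    refine integral_mul_le_Lp_mul_Lq_of_nonneg hconj1 (ae_of_all _ hu0)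
      (ae_of_all _ fun x => mul_nonneg (hv0 x) (hw0 x))
      (memLp_of_bdd hu hMu _) (memLp_of_bdd (hv.mul hw) (M := Mv * Mw) ?_ _)
    intro x
    rw [Pi.mul_apply, abs_mul]
    exact mul_le_mul (hMv x) (hMw x) (abs_nonneg _) ((abs_nonneg _).trans (hMv x))
  -- second Hölder application
  have hvb : ∀ x, |v x ^ s| ≤ Mv ^ s := by
    intro x
    rw [abs_of_nonneg (Real.rpow_nonneg (hv0 x) s)]
    exact Real.rpow_le_rpow (hv0 x) ((abs_of_nonneg (hv0 x)) ▸ hMv x) (le_of_lt hspos)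
  have hwb : ∀ x, |w x ^ s| ≤ Mw ^ s := by
    intro x
    rw [abs_of_nonneg (Real.rpow_nonneg (hw0 x) s)]
    exact Real.rpow_le_rpow (hw0 x) ((abs_of_nonneg (hw0 x)) ▸ hMw x) (le_of_lt hspos)
  have step2 : ∫ x, (v x * w x) ^ s ∂μ
      ≤ (∫ x, v x ^ r2 ∂μ) ^ (s/r2) * (∫ x, w x ^ r3 ∂μ) ^ (s/r3) := by
    have hpointwise : ∀ x, (v x * w x) ^ s = (v x ^ s) * (w x ^ s) := fun x =>
      Real.mul_rpow (hv0 x) (hw0 x)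
    rw [integral_congr_ae (ae_of_all _ hpointwise)]
    have happ := integral_mul_le_Lp_mul_Lq_of_nonneg (μ := μ) hconj2
      (ae_of_all _ fun x => Real.rpow_nonneg (hv0 x) s)
      (ae_of_all _ fun x => Real.rpow_nonneg (hw0 x) s)
      (memLp_of_bdd (hv.rpow_const fun x => Or.inr (le_of_lt hspos)) hvb _)
      (memLp_of_bdd (hw.rpow_const fun x => Or.inr (le_of_lt hspos)) hwb _)
    have hv2 : ∀ x:ℝ, (v x ^ s) ^ (r2/s) = v x ^ r2 := by
      intro x
      rw [← Real.rpow_mul (hv0 x)]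
      congr 1
      field_simp
    have hw2 : ∀ x:ℝ, (w x ^ s) ^ (r3/s) = w x ^ r3 := by
      intro x
      rw [← Real.rpow_mul (hw0 x)]
      congr 1
      field_simp
    have e2 : 1/(r2/s) = s/r2 := by rw [one_div, inv_div]
    have e3 : 1/(r3/s) = s/r3 := by rw [one_div, inv_div]
    simp only [hv2, hw2, e2, e3] at happ
    exact happ
  -- combine
  have hA : 0 ≤ ∫ x, v x ^ r2 ∂μ := integral_nonneg fun x => Real.rpow_nonneg (hv0 x) r2
  have hB : 0 ≤ ∫ x, w x ^ r3 ∂μ := integral_nonneg fun x => Real.rpow_nonneg (hw0 x) r3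
  have step3 : (∫ x, (v x * w x) ^ s ∂μ) ^ (1/s)
      ≤ (∫ x, v x ^ r2 ∂μ) ^ (1/r2) * (∫ x, w x ^ r3 ∂μ) ^ (1/r3) := by
    have h0 : 0 ≤ ∫ x, (v x * w x) ^ s ∂μ :=
      integral_nonneg fun x => Real.rpow_nonneg (mul_nonneg (hv0 x) (hw0 x)) s
    calc (∫ x, (v x * w x) ^ s ∂μ) ^ (1/s)
        ≤ ((∫ x, v x ^ r2 ∂μ) ^ (s/r2) * (∫ x, w x ^ r3 ∂μ) ^ (s/r3)) ^ (1/s) :=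
          Real.rpow_le_rpow h0 step2 (by positivity)
      _ = (∫ x, v x ^ r2 ∂μ) ^ (1/r2) * (∫ x, w x ^ r3 ∂μ) ^ (1/r3) := by
          rw [Real.mul_rpow (Real.rpow_nonneg hA _) (Real.rpow_nonneg hB _),
            ← Real.rpow_mul hA, ← Real.rpow_mul hB]
          congr 2 <;> field_simp <;> ring
  calc ∫ x, u x * (v x * w x) ∂μ
      ≤ (∫ x, u x ^ r1 ∂μ) ^ (1/r1) * (∫ x, (v x * w x) ^ s ∂μ) ^ (1/s) := step1
    _ ≤ (∫ x, u x ^ r1 ∂μ) ^ (1/r1)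
        * ((∫ x, v x ^ r2 ∂μ) ^ (1/r2) * (∫ x, w x ^ r3 ∂μ) ^ (1/r3)) := by
        apply mul_le_mul_of_nonneg_left step3
        exact Real.rpow_nonneg (integral_nonneg fun x => Real.rpow_nonneg (hu0 x) r1) _


noncomputable def Pint (n : ℕ) (f : ℝ → ℝ) (j : ℕ) : ℝ :=
  ∫ x in (0:ℝ)..(2 * Real.pi), |iteratedDeriv j f x| ^ (2 * (n:ℝ) / (j:ℝ))

lemma Pint_nonneg (n : ℕ) (f : ℝ → ℝ) (j : ℕ) : 0 ≤ Pint n f j := by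
  apply intervalIntegral.integral_nonneg (by positivity)
  intro x _
  exact Real.rpow_nonneg (abs_nonneg _) _

instance finIoc : IsFiniteMeasure (volume.restrict (Set.Ioc (0:ℝ) (2 * Real.pi))) := by
  constructor
  rw [Measure.restrict_apply_univ, Real.volume_Ioc]
  exact ENNReal.ofReal_lt_top

/-- global bound for iterated derivatives of smooth periodic functions -/
lemma exists_bound {f : ℝ → ℝ} (hf : ContDiff ℝ ∞ f)
    (hper : Function.Periodic f (2 * Real.pi)) (j : ℕ) :
    ∃ M : ℝ, 0 ≤ M ∧ ∀ x, |iteratedDeriv j f x| ≤ M := by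
  obtain ⟨C, hC⟩ := (isCompact_Icc (a := (0:ℝ)) (b := 2 * Real.pi)).exists_bound_of_continuousOn
    (continuous_iteratedDeriv hf j).continuousOn
  refine ⟨max C 0, le_max_right _ _, fun x => ?_⟩
  obtain ⟨y, hy, hxy⟩ := (periodic_iteratedDeriv hper j).exists_mem_Ico₀ (by positivity) x
  rw [hxy]
  calc |iteratedDeriv j f y| ≤ C := by
        simpa [Real.norm_eq_abs] using hC y (Set.Ico_subset_Icc_self hy)
    _ ≤ max C 0 := le_max_left _ _

/-- the `i = 1` step of the chain -/
lemma step_one (n : ℕ) {f : ℝ → ℝ} (hf : ContDiff ℝ ∞ f)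
    (hper : Function.Periodic f (2 * Real.pi)) (hn : 2 ≤ n)
    {S : ℝ} (hS : ∀ x, |f x| ≤ S)
    (hpos : 0 < Pint n f 1) :
    ((Pint n f 1) ^ ((1:ℝ) / (2 * (n:ℝ)))) ^ 2
      ≤ 2 * (n:ℝ) * (S * (Pint n f 2) ^ ((2:ℝ) / (2 * (n:ℝ)))) := by
  have hN : (2:ℝ) ≤ (n:ℝ) := by exact_mod_cast hn
  set N : ℝ := (n:ℝ) with hNdef
  set p : ℝ := 2 * N with hpdef
  have hp : 2 < p := by simp only [hpdef]; linarith
  have hS0 : 0 ≤ S := le_trans (abs_nonneg _) (hS 0)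
  -- IBP
  have h1 := ibp_estimate hf hper hp 0
  -- pull out sup bound
  set g : ℝ → ℝ := iteratedDeriv 1 f with hg
  set w : ℝ → ℝ := iteratedDeriv 2 f with hw
  have hgc : Continuous g := continuous_iteratedDeriv hf 1
  have hwc : Continuous w := continuous_iteratedDeriv hf 2
  obtain ⟨Mg, hMg0, hMg⟩ := exists_bound hf hper 1
  obtain ⟨Mw, hMw0, hMw⟩ := exists_bound hf hper 2
  have hT0 : (0:ℝ) ≤ 2 * Real.pi := by positivity
  have hD0 : iteratedDeriv 0 f = f := iteratedDeriv_zero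
  have h2 : ∫ x in (0:ℝ)..(2 * Real.pi),
        |iteratedDeriv 0 f x| * (|g x| ^ (p - 2) * |w x|)
      ≤ S * ∫ x in (0:ℝ)..(2 * Real.pi), |g x| ^ (p - 2) * |w x| := by
    rw [← intervalIntegral.integral_const_mul]
    apply intervalIntegral.integral_mono_on hT0
    · exact ((continuous_iteratedDeriv hf 0).abs.mul
        ((hgc.abs.rpow_const fun x => Or.inr (by linarith)).mul hwc.abs)).intervalIntegrable 0 _
    · exact (continuous_const.mul
        ((hgc.abs.rpow_const fun x => Or.inr (by linarith)).mul hwc.abs)).intervalIntegrable 0 _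
    · intro x _
      apply mul_le_mul_of_nonneg_right
      · rw [hD0]; exact hS x
      · positivity
  -- Hölder with exponents N/(N-1) and N
  have hNm1 : (0:ℝ) < N - 1 := by linarith
  have hconj : (N/(N-1)).HolderConjugate N := by
    rw [Real.holderConjugate_iff]; constructor
    · rw [lt_div_iff₀ hNm1]; linarith
    · rw [inv_div]
      field_simp
      ring
  have hgb : ∀ x, |(|g x| ^ (p-2))| ≤ Mg ^ (p-2) := by
    intro x
    rw [abs_of_nonneg (Real.rpow_nonneg (abs_nonneg _) _)]
    exact Real.rpow_le_rpow (abs_nonneg _) (hMg x) (by linarith)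
  have h3 : ∫ x in (0:ℝ)..(2 * Real.pi), |g x| ^ (p - 2) * |w x|
      ≤ (∫ x in (0:ℝ)..(2 * Real.pi), (|g x| ^ (p - 2)) ^ (N/(N-1))) ^ (1/(N/(N-1)))
        * (∫ x in (0:ℝ)..(2 * Real.pi), |w x| ^ N) ^ (1/N) := by
    rw [intervalIntegral.integral_of_le hT0, intervalIntegral.integral_of_le hT0,
      intervalIntegral.integral_of_le hT0]
    exact holder2 (hgc.abs.rpow_const fun x => Or.inr (by linarith)) hwc.abs
      hgb (fun x => by rw [abs_abs]; exact hMw x)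
      (fun x => Real.rpow_nonneg (abs_nonneg _) _) (fun x => abs_nonneg _) hconj
  -- identify the two integrals with Pint
  have hid1 : ∀ x : ℝ, (|g x| ^ (p - 2)) ^ (N/(N-1)) = |g x| ^ (2 * N / ((1:ℕ):ℝ)) := by
    intro x
    rw [← Real.rpow_mul (abs_nonneg _)]
    congr 1
    simp only [hpdef, Nat.cast_one]
    field_simp
  have hid2 : ∀ x : ℝ, |w x| ^ N = |w x| ^ (2 * N / ((2:ℕ):ℝ)) := by
    intro x
    congr 1
    push_cast
    field_simp
  have hP1 : ∫ x in (0:ℝ)..(2 * Real.pi), (|g x| ^ (p - 2)) ^ (N/(N-1)) = Pint n f 1 := by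
    rw [Pint]
    apply intervalIntegral.integral_congr
    intro x _
    show (|g x| ^ (p - 2)) ^ (N/(N-1)) = |iteratedDeriv 1 f x| ^ (2 * (n:ℝ) / ((1:ℕ):ℝ))
    rw [hid1 x]
  have hP2 : ∫ x in (0:ℝ)..(2 * Real.pi), |w x| ^ N = Pint n f 2 := by
    rw [Pint]
    apply intervalIntegral.integral_congr
    intro x _
    show |w x| ^ N = |iteratedDeriv 2 f x| ^ (2 * (n:ℝ) / ((2:ℕ):ℝ))
    rw [hid2 x]
  have hexp1 : 1/(N/(N-1)) = (N-1)/N := one_div_div _ _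
  rw [hP1, hP2, hexp1] at h3
  -- combine
  have hchain : Pint n f 1 ≤ (p - 1) * S
      * ((Pint n f 1) ^ ((N-1)/N) * (Pint n f 2) ^ (1/N)) := by
    have hPint1eq : Pint n f 1
        = ∫ x in (0:ℝ)..(2 * Real.pi), |iteratedDeriv (0+1) f x| ^ p := by
      rw [Pint]
      apply intervalIntegral.integral_congr
      intro x _
      norm_num [hpdef]
      rfl
    have hmid : 0 ≤ ∫ x in (0:ℝ)..(2 * Real.pi), |g x| ^ (p - 2) * |w x| := by
      apply intervalIntegral.integral_nonneg hT0
      intro x _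
      positivity
    calc Pint n f 1
        = ∫ x in (0:ℝ)..(2 * Real.pi), |iteratedDeriv (0+1) f x| ^ p := hPint1eq
      _ ≤ (p - 1) * ∫ x in (0:ℝ)..(2 * Real.pi),
            |iteratedDeriv 0 f x| * (|iteratedDeriv (0+1) f x| ^ (p - 2)
              * |iteratedDeriv (0+2) f x|) := ibp_estimate hf hper hp 0
      _ ≤ (p - 1) * (S * ∫ x in (0:ℝ)..(2 * Real.pi), |g x| ^ (p - 2) * |w x|) := by
          apply mul_le_mul_of_nonneg_left _ (by linarith : (0:ℝ) ≤ p - 1)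
          exact h2
      _ ≤ (p - 1) * (S * ((Pint n f 1) ^ ((N-1)/N) * (Pint n f 2) ^ (1/N))) := by
          apply mul_le_mul_of_nonneg_left _ (by linarith : (0:ℝ) ≤ p - 1)
          exact mul_le_mul_of_nonneg_left h3 hS0
      _ = (p - 1) * S * ((Pint n f 1) ^ ((N-1)/N) * (Pint n f 2) ^ (1/N)) := by ring
  -- divide by (Pint n f 1)^((N-1)/N)
  have hNne : N ≠ 0 := by linarith
  have hsplit : Pint n f 1 = (Pint n f 1) ^ ((1:ℝ)/N) * (Pint n f 1) ^ ((N-1)/N) := by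
    rw [← Real.rpow_add hpos]
    rw [show (1:ℝ)/N + (N-1)/N = 1 by field_simp; ring]
    exact (Real.rpow_one _).symm
  have hposd : 0 < (Pint n f 1) ^ ((N-1)/N) := Real.rpow_pos_of_pos hpos _
  have hdiv : (Pint n f 1) ^ ((1:ℝ)/N) ≤ (p - 1) * S * (Pint n f 2) ^ (1/N) := by
    have h4 : (Pint n f 1) ^ ((1:ℝ)/N) * (Pint n f 1) ^ ((N-1)/N)
        ≤ ((p - 1) * S * (Pint n f 2) ^ (1/N)) * (Pint n f 1) ^ ((N-1)/N) := by
      rw [← hsplit]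
      calc Pint n f 1 ≤ (p - 1) * S * ((Pint n f 1) ^ ((N-1)/N) * (Pint n f 2) ^ (1/N)) := hchain
        _ = ((p - 1) * S * (Pint n f 2) ^ (1/N)) * (Pint n f 1) ^ ((N-1)/N) := by ring
    exact le_of_mul_le_mul_right h4 hposd
  -- final form
  have hsq : ((Pint n f 1) ^ ((1:ℝ) / (2 * N))) ^ 2 = (Pint n f 1) ^ ((1:ℝ)/N) := by
    rw [← Real.rpow_natCast ((Pint n f 1) ^ ((1:ℝ) / (2 * N))) 2,
      ← Real.rpow_mul (le_of_lt hpos)]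
    congr 1
    push_cast
    field_simp
  have hexp2 : (2:ℝ) / (2 * N) = 1/N := by field_simp
  rw [hsq, hexp2]
  calc (Pint n f 1) ^ ((1:ℝ)/N) ≤ (p - 1) * S * (Pint n f 2) ^ (1/N) := hdiv
    _ ≤ 2 * N * (S * (Pint n f 2) ^ (1/N)) := by
        have : 0 ≤ S * (Pint n f 2) ^ (1/N) :=
          mul_nonneg hS0 (Real.rpow_nonneg (Pint_nonneg n f 2) _)
        nlinarith [this]


/-- the middle steps of the chain -/
lemma step_mid (n : ℕ) {f : ℝ → ℝ} (hf : ContDiff ℝ ∞ f)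
    (hper : Function.Periodic f (2 * Real.pi)) (m : ℕ) (hm1 : 1 ≤ m) (hm : m + 2 ≤ n)
    (hpos : 0 < Pint n f (m + 1)) :
    ((Pint n f (m + 1)) ^ (((m:ℝ) + 1) / (2 * (n:ℝ)))) ^ 2
      ≤ 2 * (n:ℝ) * ((Pint n f m) ^ ((m:ℝ) / (2 * (n:ℝ)))
          * (Pint n f (m + 2)) ^ (((m:ℝ) + 2) / (2 * (n:ℝ)))) := by
  set N : ℝ := (n:ℝ) with hNdef
  set M : ℝ := (m:ℝ) with hMdef
  have hM1 : (1:ℝ) ≤ M := by rw [hMdef]; exact_mod_cast hm1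
  have hMN : M + 2 ≤ N := by rw [hMdef, hNdef]; exact_mod_cast hm
  have hN0 : (0:ℝ) < N := by linarith
  have hNM1 : (0:ℝ) < N - M - 1 := by linarith
  set p : ℝ := 2 * N / (M + 1) with hpdef
  have hp : 2 < p := by
    rw [hpdef, lt_div_iff₀ (by linarith : (0:ℝ) < M + 1)]
    linarith
  have hT0 : (0:ℝ) ≤ 2 * Real.pi := by positivity
  set u : ℝ → ℝ := fun x => |iteratedDeriv m f x| with hu
  set v : ℝ → ℝ := fun x => |iteratedDeriv (m + 1) f x| ^ (p - 2) with hv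
  set w : ℝ → ℝ := fun x => |iteratedDeriv (m + 2) f x| with hw
  have huc : Continuous u := (continuous_iteratedDeriv hf m).abs
  have hvc : Continuous v :=
    (continuous_iteratedDeriv hf (m+1)).abs.rpow_const fun x => Or.inr (by linarith)
  have hwc : Continuous w := (continuous_iteratedDeriv hf (m+2)).abs
  obtain ⟨Mu, hMu0, hMu⟩ := exists_bound hf hper m
  obtain ⟨Mg, hMg0, hMg⟩ := exists_bound hf hper (m+1)
  obtain ⟨Mw, hMw0, hMw⟩ := exists_bound hf hper (m+2)
  -- Hölder exponents
  set r1 : ℝ := 2 * N / M with hr1def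
  set r2 : ℝ := N / (N - M - 1) with hr2def
  set r3 : ℝ := 2 * N / (M + 2) with hr3def
  have h1r1 : 1 < r1 := by rw [hr1def, lt_div_iff₀ (by linarith : (0:ℝ) < M)]; linarith
  have h1r2 : 1 < r2 := by rw [hr2def, lt_div_iff₀ hNM1]; linarith
  have h1r3 : 1 < r3 := by rw [hr3def, lt_div_iff₀ (by linarith : (0:ℝ) < M + 2)]; linarith
  have hsum : 1/r1 + 1/r2 + 1/r3 = 1 := by
    rw [hr1def, hr2def, hr3def, one_div_div, one_div_div, one_div_div]
    field_simp
    ring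
  -- holder3
  have hub : ∀ x, |u x| ≤ Mu := fun x => by rw [hu, abs_abs]; exact hMu x
  have hvb : ∀ x, |v x| ≤ Mg ^ (p - 2) := by
    intro x
    rw [hv, abs_of_nonneg (Real.rpow_nonneg (abs_nonneg _) _)]
    exact Real.rpow_le_rpow (abs_nonneg _) (hMg x) (by linarith)
  have hwb : ∀ x, |w x| ≤ Mw := fun x => by rw [hw, abs_abs]; exact hMw x
  have hhold := holder3 (μ := volume.restrict (Set.Ioc (0:ℝ) (2 * Real.pi)))
    huc hvc hwc hub hvb hwb
    (fun x => abs_nonneg _) (fun x => Real.rpow_nonneg (abs_nonneg _) _)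
    (fun x => abs_nonneg _) h1r1 h1r2 h1r3 hsum
  -- identify the integrals with Pint
  have hPu : ∫ x in Set.Ioc (0:ℝ) (2 * Real.pi), u x ^ r1 = Pint n f m := by
    rw [Pint, intervalIntegral.integral_of_le hT0]
  have hPv : ∫ x in Set.Ioc (0:ℝ) (2 * Real.pi), v x ^ r2 = Pint n f (m + 1) := by
    rw [Pint, intervalIntegral.integral_of_le hT0]
    apply setIntegral_congr_fun measurableSet_Ioc
    intro x _
    show (|iteratedDeriv (m+1) f x| ^ (p - 2)) ^ r2
      = |iteratedDeriv (m+1) f x| ^ (2 * (n:ℝ) / ((m + 1 : ℕ):ℝ))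
    rw [← Real.rpow_mul (abs_nonneg _)]
    congr 1
    rw [hpdef, hr2def]
    push_cast
    field_simp
    ring
  have hPw : ∫ x in Set.Ioc (0:ℝ) (2 * Real.pi), w x ^ r3 = Pint n f (m + 2) := by
    rw [Pint, intervalIntegral.integral_of_le hT0]
    apply setIntegral_congr_fun measurableSet_Ioc
    intro x _
    show |iteratedDeriv (m+2) f x| ^ r3 = |iteratedDeriv (m+2) f x| ^ (2 * (n:ℝ) / ((m + 2 : ℕ):ℝ))
    congr 1
    rw [hr3def]
    push_cast
    ring
  have he1 : 1/r1 = M / (2 * N) := by rw [hr1def, one_div_div]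
  have he2 : 1/r2 = (N - M - 1) / N := by rw [hr2def, one_div_div]
  have he3 : 1/r3 = (M + 2) / (2 * N) := by rw [hr3def, one_div_div]
  rw [hPu, hPv, hPw, he1, he2, he3] at hhold
  -- chain with ibp
  have hibp := ibp_estimate hf hper hp m
  have hPmid : Pint n f (m + 1) = ∫ x in (0:ℝ)..(2 * Real.pi), |iteratedDeriv (m+1) f x| ^ p := by
    rw [Pint]
    apply intervalIntegral.integral_congr
    intro x _
    show |iteratedDeriv (m+1) f x| ^ (2 * (n:ℝ) / ((m + 1 : ℕ):ℝ)) = |iteratedDeriv (m+1) f x| ^ p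
    congr 1
    rw [hpdef]
    push_cast
    ring
  have hintform : ∫ x in (0:ℝ)..(2 * Real.pi),
      |iteratedDeriv m f x| * (|iteratedDeriv (m + 1) f x| ^ (p - 2) * |iteratedDeriv (m + 2) f x|)
      = ∫ x in Set.Ioc (0:ℝ) (2 * Real.pi), u x * (v x * w x) := by
    rw [intervalIntegral.integral_of_le hT0]
  have hchain : Pint n f (m + 1)
      ≤ (p - 1) * ((Pint n f m) ^ (M / (2*N))
          * ((Pint n f (m+1)) ^ ((N - M - 1)/N) * (Pint n f (m+2)) ^ ((M + 2)/(2*N)))) := by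
    calc Pint n f (m + 1)
        = ∫ x in (0:ℝ)..(2 * Real.pi), |iteratedDeriv (m+1) f x| ^ p := hPmid
      _ ≤ (p - 1) * ∫ x in (0:ℝ)..(2 * Real.pi), |iteratedDeriv m f x|
            * (|iteratedDeriv (m + 1) f x| ^ (p - 2) * |iteratedDeriv (m + 2) f x|) := hibp
      _ = (p - 1) * ∫ x in Set.Ioc (0:ℝ) (2 * Real.pi), u x * (v x * w x) := by rw [hintform]
      _ ≤ (p - 1) * ((Pint n f m) ^ (M / (2*N))
            * ((Pint n f (m+1)) ^ ((N - M - 1)/N) * (Pint n f (m+2)) ^ ((M + 2)/(2*N)))) := by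
          apply mul_le_mul_of_nonneg_left hhold (by linarith : (0:ℝ) ≤ p - 1)
  -- divide by the positive middle factor
  have hsplit : Pint n f (m+1)
      = (Pint n f (m+1)) ^ ((M+1)/N) * (Pint n f (m+1)) ^ ((N - M - 1)/N) := by
    rw [← Real.rpow_add hpos]
    rw [show (M+1)/N + (N - M - 1)/N = 1 by field_simp; ring]
    exact (Real.rpow_one _).symm
  have hposd : 0 < (Pint n f (m+1)) ^ ((N - M - 1)/N) := Real.rpow_pos_of_pos hpos _
  have hdiv : (Pint n f (m+1)) ^ ((M+1)/N)
      ≤ (p - 1) * ((Pint n f m) ^ (M / (2*N)) * (Pint n f (m+2)) ^ ((M + 2)/(2*N))) := by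
    have h4 : (Pint n f (m+1)) ^ ((M+1)/N) * (Pint n f (m+1)) ^ ((N - M - 1)/N)
        ≤ ((p - 1) * ((Pint n f m) ^ (M / (2*N)) * (Pint n f (m+2)) ^ ((M + 2)/(2*N))))
          * (Pint n f (m+1)) ^ ((N - M - 1)/N) := by
      rw [← hsplit]
      calc Pint n f (m+1)
          ≤ (p - 1) * ((Pint n f m) ^ (M / (2*N))
              * ((Pint n f (m+1)) ^ ((N - M - 1)/N) * (Pint n f (m+2)) ^ ((M + 2)/(2*N)))) :=
            hchain
        _ = ((p - 1) * ((Pint n f m) ^ (M / (2*N)) * (Pint n f (m+2)) ^ ((M + 2)/(2*N))))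
            * (Pint n f (m+1)) ^ ((N - M - 1)/N) := by ring
    exact le_of_mul_le_mul_right h4 hposd
  have hsq : ((Pint n f (m+1)) ^ ((M + 1) / (2 * N))) ^ 2 = (Pint n f (m+1)) ^ ((M+1)/N) := by
    rw [← Real.rpow_natCast ((Pint n f (m+1)) ^ ((M + 1) / (2 * N))) 2,
      ← Real.rpow_mul (le_of_lt hpos)]
    congr 1
    push_cast
    field_simp
  rw [hsq]
  have hprod0 : 0 ≤ (Pint n f m) ^ (M / (2*N)) * (Pint n f (m+2)) ^ ((M + 2)/(2*N)) :=
    mul_nonneg (Real.rpow_nonneg (Pint_nonneg n f m) _) (Real.rpow_nonneg (Pint_nonneg n f (m+2)) _)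
  have hple : p - 1 ≤ 2 * N := by
    have : p ≤ 2 * N := by
      rw [hpdef]
      apply div_le_self (by linarith) (by linarith)
    linarith
  calc (Pint n f (m+1)) ^ ((M+1)/N)
      ≤ (p - 1) * ((Pint n f m) ^ (M / (2*N)) * (Pint n f (m+2)) ^ ((M + 2)/(2*N))) := hdiv
    _ ≤ 2 * N * ((Pint n f m) ^ (M / (2*N)) * (Pint n f (m+2)) ^ ((M + 2)/(2*N))) :=
        mul_le_mul_of_nonneg_right hple hprod0


/-- a continuous nonnegative periodic function with zero integral vanishes -/
lemma zero_of_integral_zero {F : ℝ → ℝ} (hF : Continuous F) (hF0 : ∀ x, 0 ≤ F x)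
    (hper : Function.Periodic F (2 * Real.pi))
    (hint : ∫ x in (0:ℝ)..(2 * Real.pi), F x = 0) : ∀ x, F x = 0 := by
  have hT : (0:ℝ) < 2 * Real.pi := by positivity
  have hae : F =ᵐ[volume.restrict (Set.Ioc (0:ℝ) (2 * Real.pi))] 0 :=
    (intervalIntegral.integral_eq_zero_iff_of_le_of_nonneg_ae hT.le
      (ae_of_all _ hF0) (hF.intervalIntegrable 0 _)).mp hint
  have hopen : IsOpen {x : ℝ | F x ≠ 0} := by
    have : {x : ℝ | F x ≠ 0} = F ⁻¹' ({0}ᶜ) := rfl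
    rw [this]
    exact isOpen_compl_singleton.preimage hF
  have hnull : volume ({x : ℝ | F x ≠ 0} ∩ Set.Ioc (0:ℝ) (2 * Real.pi)) = 0 := by
    have h1 : volume.restrict (Set.Ioc (0:ℝ) (2 * Real.pi)) {x : ℝ | F x ≠ 0} = 0 := by
      rw [← ae_iff] at *
      exact hae
    rwa [Measure.restrict_apply hopen.measurableSet] at h1
  have hIoo : ∀ z ∈ Set.Ioo (0:ℝ) (2 * Real.pi), F z = 0 := by
    intro z hz
    by_contra hFz
    have hU : IsOpen ({x : ℝ | F x ≠ 0} ∩ Set.Ioo (0:ℝ) (2 * Real.pi)) :=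
      hopen.inter isOpen_Ioo
    have hUne : ({x : ℝ | F x ≠ 0} ∩ Set.Ioo (0:ℝ) (2 * Real.pi)).Nonempty := ⟨z, hFz, hz⟩
    have hle : volume ({x : ℝ | F x ≠ 0} ∩ Set.Ioo (0:ℝ) (2 * Real.pi)) = 0 :=
      measure_mono_null (Set.inter_subset_inter_right _ Set.Ioo_subset_Ioc_self) hnull
    exact absurd hle (ne_of_gt (hU.measure_pos volume hUne))
  have hIcc : ∀ z ∈ Set.Icc (0:ℝ) (2 * Real.pi), F z = 0 := by
    have hclosed : IsClosed (F ⁻¹' {0}) := isClosed_singleton.preimage hF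
    have hsub : Set.Ioo (0:ℝ) (2 * Real.pi) ⊆ F ⁻¹' {0} := fun z hz => hIoo z hz
    have := closure_minimal hsub hclosed
    rw [closure_Ioo (ne_of_lt hT)] at this
    exact fun z hz => this hz
  intro x
  obtain ⟨y, hy, hxy⟩ := hper.exists_mem_Ico₀ hT x
  rw [hxy]
  exact hIcc y (Set.Ico_subset_Icc_self hy)

/-- if `Pint n f j = 0` for `j ≥ 1` then the j-th derivative vanishes -/
lemma deriv_zero_of_Pint_zero (n : ℕ) (hn : 1 ≤ n) {f : ℝ → ℝ} (hf : ContDiff ℝ ∞ f)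
    (hper : Function.Periodic f (2 * Real.pi)) (j : ℕ) (hj : 1 ≤ j)
    (hP : Pint n f j = 0) : ∀ x, iteratedDeriv j f x = 0 := by
  have hexp : 2 * (n:ℝ) / (j:ℝ) ≠ 0 := by
    have h1 : (0:ℝ) < (n:ℝ) := by exact_mod_cast hn
    have h2 : (0:ℝ) < (j:ℝ) := by exact_mod_cast hj
    positivity
  have hvan := zero_of_integral_zero
    (F := fun x => |iteratedDeriv j f x| ^ (2 * (n:ℝ) / (j:ℝ)))
    ((continuous_iteratedDeriv hf j).abs.rpow_const fun x => Or.inr (by positivity))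
    (fun x => Real.rpow_nonneg (abs_nonneg _) _)
    (fun x => by simp [periodic_iteratedDeriv hper j x])
    hP
  intro x
  have := hvan x
  rw [Real.rpow_eq_zero (abs_nonneg _) hexp] at this
  exact abs_eq_zero.mp this

/-- downward propagation of vanishing derivatives -/
lemma down_step {f : ℝ → ℝ} (hf : ContDiff ℝ ∞ f)
    (hper : Function.Periodic f (2 * Real.pi)) (j : ℕ)
    (hzero : ∀ x, iteratedDeriv (j + 2) f x = 0) : ∀ x, iteratedDeriv (j + 1) f x = 0 := by
  have hdiff : Differentiable ℝ (iteratedDeriv (j+1) f) :=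
    (contDiff_iteratedDeriv' hf (j+1)).differentiable (by simp)
  have hderiv0 : ∀ x, deriv (iteratedDeriv (j+1) f) x = 0 := by
    intro x
    rw [← iteratedDeriv_succ]
    exact hzero x
  have hconst : ∀ x, iteratedDeriv (j+1) f x = iteratedDeriv (j+1) f 0 := fun x =>
    is_const_of_deriv_eq_zero hdiff hderiv0 x 0
  have hFTC : ∫ x in (0:ℝ)..(2 * Real.pi), iteratedDeriv (j+1) f x
      = iteratedDeriv j f (2 * Real.pi) - iteratedDeriv j f 0 :=
    intervalIntegral.integral_eq_sub_of_hasDerivAt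
      (fun x _ => hasDerivAt_iteratedDeriv hf j x)
      ((continuous_iteratedDeriv hf (j+1)).intervalIntegrable 0 _)
  have hper' : iteratedDeriv j f (2 * Real.pi) = iteratedDeriv j f 0 := by
    have := periodic_iteratedDeriv hper j 0
    simpa using this
  rw [hper', sub_self] at hFTC
  have hc : ∫ x in (0:ℝ)..(2 * Real.pi), iteratedDeriv (j+1) f x
      = (2 * Real.pi) * iteratedDeriv (j+1) f 0 := by
    rw [intervalIntegral.integral_congr (g := fun _ => iteratedDeriv (j+1) f 0)
      (fun x _ => hconst x)]
    rw [intervalIntegral.integral_const, smul_eq_mul, sub_zero]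
  rw [hc] at hFTC
  have hc0 : iteratedDeriv (j+1) f 0 = 0 := by
    have hpi : (2 * Real.pi) ≠ 0 := by positivity
    exact (mul_eq_zero.mp hFTC).resolve_left hpi
  intro x
  rw [hconst x, hc0]

lemma down_chain {f : ℝ → ℝ} (hf : ContDiff ℝ ∞ f)
    (hper : Function.Periodic f (2 * Real.pi)) :
    ∀ j, (∀ x, iteratedDeriv (j + 1) f x = 0) → ∀ x, iteratedDeriv 1 f x = 0 := by
  intro j
  induction j with
  | zero => exact fun h => h
  | succ k ih => exact fun h => ih (down_step hf hper k h)

lemma up_chain {f : ℝ → ℝ} (h1 : ∀ x, iteratedDeriv 1 f x = 0) :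
    ∀ j, 1 ≤ j → ∀ x, iteratedDeriv j f x = 0 := by
  intro j hj
  induction j with
  | zero => omega
  | succ k ih =>
    rcases Nat.eq_or_lt_of_le hj with h | h
    · rw [← h]
      exact h1
    · have hk : 1 ≤ k := by omega
      have hzero := ih hk
      intro x
      rw [iteratedDeriv_succ, show iteratedDeriv k f = (fun _ => (0:ℝ)) from funext hzero,
        deriv_const]


end GNtorus

open GNtorus

/-- Gagliardo–Nirenberg on the torus: for smooth `2π`-periodic `f` and `1 ≤ i ≤ n`,
`‖∂^i f‖_{L^{2n/i}} ≤ C ‖f‖_∞^{1−i/n} ‖f‖_{H^n}^{i/n}` with `C` independent of `f`. -/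
theorem gagliardo_nirenberg_torus (n : ℕ) (hn : 1 ≤ n) :
    ∃ C : ℝ, 0 < C ∧
      ∀ (f : ℝ → ℝ), ContDiff ℝ (⊤ : ℕ∞) f → Function.Periodic f (2 * Real.pi) →
        ∀ i : ℕ, 1 ≤ i → i ≤ n →
          (∫ x in (0:ℝ)..(2 * Real.pi),
              |iteratedDeriv i f x| ^ ((2 * n : ℝ) / i)) ^ ((i : ℝ) / (2 * n))
            ≤ C * (⨆ x : ℝ, |f x|) ^ (1 - (i : ℝ) / n)
                * ((∑ k ∈ range (n + 1),
                      ∫ x in (0:ℝ)..(2 * Real.pi), (iteratedDeriv k f x) ^ 2)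
                    ^ ((1 : ℝ) / 2)) ^ ((i : ℝ) / n) := by
  classical
  refine ⟨(2 * (n:ℝ)) ^ (n ^ 2) + 1, by positivity, ?_⟩
  intro f hf' hper i hi1 hin
  have hf : ContDiff ℝ ∞ f := hf'.of_le (by simp)
  set C : ℝ := (2 * (n:ℝ)) ^ (n ^ 2) + 1 with hCdef
  have hC1 : 1 ≤ C := by
    have : (0:ℝ) ≤ (2 * (n:ℝ)) ^ (n ^ 2) := by positivity
    linarith
  have hT0 : (0:ℝ) ≤ 2 * Real.pi := by positivity
  have hnR : (0:ℝ) < (n:ℝ) := by exact_mod_cast hn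
  -- the sup norm
  set S : ℝ := ⨆ x, |f x| with hSdef
  obtain ⟨M0, hM00, hM0⟩ := exists_bound hf hper 0
  have hBdd : BddAbove (Set.range fun x => |f x|) := by
    refine ⟨M0, ?_⟩
    rintro _ ⟨x, rfl⟩
    simpa [iteratedDeriv_zero] using hM0 x
  have hSle : ∀ x, |f x| ≤ S := fun x => le_ciSup hBdd x
  have hS0 : 0 ≤ S := le_trans (abs_nonneg _) (hSle 0)
  -- the H^n norm
  set HS : ℝ := (∑ k ∈ range (n + 1),
      ∫ x in (0:ℝ)..(2 * Real.pi), (iteratedDeriv k f x) ^ 2) ^ ((1:ℝ)/2) with hHSdef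
  have hsum0 : 0 ≤ ∑ k ∈ range (n + 1), ∫ x in (0:ℝ)..(2 * Real.pi), (iteratedDeriv k f x) ^ 2 :=
    Finset.sum_nonneg fun k _ =>
      intervalIntegral.integral_nonneg hT0 (fun x _ => sq_nonneg _)
  have hHS0 : 0 ≤ HS := Real.rpow_nonneg hsum0 _
  -- `Pint n f n` is the top Sobolev piece
  have hPneq : Pint n f n = ∫ x in (0:ℝ)..(2 * Real.pi), (iteratedDeriv n f x) ^ 2 := by
    rw [Pint]
    apply intervalIntegral.integral_congr
    intro x _
    show |iteratedDeriv n f x| ^ (2 * (n:ℝ) / (n:ℝ)) = (iteratedDeriv n f x) ^ 2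
    rw [show 2 * (n:ℝ) / (n:ℝ) = ((2:ℕ):ℝ) by push_cast; field_simp,
      Real.rpow_natCast]
    exact sq_abs _
  have hPn_le : Pint n f n
      ≤ ∑ k ∈ range (n + 1), ∫ x in (0:ℝ)..(2 * Real.pi), (iteratedDeriv k f x) ^ 2 := by
    rw [hPneq]
    exact Finset.single_le_sum
      (f := fun k => ∫ x in (0:ℝ)..(2 * Real.pi), (iteratedDeriv k f x) ^ 2)
      (fun k _ => intervalIntegral.integral_nonneg hT0 (fun x _ => sq_nonneg _))
      (self_mem_range_succ n)
  have hPnHS : (Pint n f n) ^ ((1:ℝ)/2) ≤ HS :=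
    Real.rpow_le_rpow (Pint_nonneg n f n) hPn_le (by norm_num)
  -- reduce goal to a statement about Pint
  show (Pint n f i) ^ ((i : ℝ) / (2 * (n:ℝ))) ≤ C * S ^ (1 - (i:ℝ)/n) * HS ^ ((i:ℝ)/n)
  by_cases hiN : i = n
  · -- the trivial case i = n
    rw [hiN]
    rw [show (n:ℝ)/(n:ℝ) = 1 from div_self (ne_of_gt hnR), Real.rpow_one,
      show (1:ℝ) - 1 = 0 by norm_num, Real.rpow_zero,
      show (n:ℝ)/(2*(n:ℝ)) = (1:ℝ)/2 by
        rw [eq_div_iff (by norm_num : (2:ℝ) ≠ 0)]; field_simp]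
    calc (Pint n f n) ^ ((1:ℝ)/2) ≤ HS := hPnHS
      _ ≤ C * 1 * HS := by nlinarith
  · have hilt : i < n := lt_of_le_of_ne hin hiN
    by_cases hPi : Pint n f i = 0
    · -- degenerate case: LHS is zero
      rw [hPi, Real.zero_rpow (by positivity : (i:ℝ)/(2*(n:ℝ)) ≠ 0)]
      have h1 : 0 ≤ S ^ (1 - (i:ℝ)/n) := Real.rpow_nonneg hS0 _
      have h2 : 0 ≤ HS ^ ((i:ℝ)/n) := Real.rpow_nonneg hHS0 _
      positivity
    · -- main case
      have hPipos : 0 < Pint n f i := lt_of_le_of_ne (Pint_nonneg n f i) (Ne.symm hPi)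
      -- positivity of all the Pint's
      have hall : ∀ j, 1 ≤ j → 0 < Pint n f j := by
        intro j hj
        rcases lt_or_eq_of_le (Pint_nonneg n f j) with h | h
        · exact h
        · exfalso
          have hDj := deriv_zero_of_Pint_zero n hn hf hper j hj h.symm
          have hD1 : ∀ x, iteratedDeriv 1 f x = 0 := by
            obtain ⟨k, rfl⟩ := Nat.exists_eq_add_of_le hj
            exact down_chain hf hper k (by simpa [Nat.add_comm] using hDj)
          have hDi : ∀ x, iteratedDeriv i f x = 0 := up_chain hD1 i hi1
          apply hPi
          rw [Pint]
          rw [intervalIntegral.integral_congr (g := fun _ => (0:ℝ)) (fun x _ => by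
            show |iteratedDeriv i f x| ^ (2 * (n:ℝ) / (i:ℝ)) = 0
            rw [hDi x, abs_zero, Real.zero_rpow]
            have hiR : (0:ℝ) < (i:ℝ) := by exact_mod_cast hi1
            positivity)]
          simp
      have hSpos : 0 < S := by
        rcases lt_or_eq_of_le hS0 with h | h
        · exact h
        · exfalso
          have hf0 : ∀ x, f x = 0 := by
            intro x
            have := hSle x
            rw [← h] at this
            exact abs_eq_zero.mp (le_antisymm this (abs_nonneg _))
          have hD1 : ∀ x, iteratedDeriv 1 f x = 0 := by
            intro x
            rw [iteratedDeriv_one, show f = (fun _ => (0:ℝ)) from funext hf0, deriv_const]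
          exact (ne_of_gt (hall i hi1)) (by
            rw [Pint]
            rw [intervalIntegral.integral_congr (g := fun _ => (0:ℝ)) (fun x _ => by
              show |iteratedDeriv i f x| ^ (2 * (n:ℝ) / (i:ℝ)) = 0
              rw [up_chain hD1 i hi1 x, abs_zero, Real.zero_rpow]
              have hiR : (0:ℝ) < (i:ℝ) := by exact_mod_cast hi1
              positivity)]
            simp)
      -- the sequence for the chain lemma
      set a : ℕ → ℝ := fun j => if j = 0 then S else (Pint n f j) ^ ((j:ℝ)/(2*(n:ℝ))) with hadef
      have hapos : ∀ j, j ≤ n → 0 < a j := by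
        intro j _
        show 0 < if j = 0 then S else (Pint n f j) ^ ((j:ℝ)/(2*(n:ℝ)))
        by_cases hj0 : j = 0
        · rw [if_pos hj0]; exact hSpos
        · rw [if_neg hj0]
          exact Real.rpow_pos_of_pos (hall j (Nat.one_le_iff_ne_zero.mpr hj0)) _
      have hK1 : (1:ℝ) ≤ 2 * (n:ℝ) := by
        have : (1:ℝ) ≤ (n:ℝ) := by exact_mod_cast hn
        linarith
      have hrec : ∀ m : ℕ, m + 2 ≤ n → a (m + 1) ^ 2 ≤ 2 * (n:ℝ) * (a m * a (m + 2)) := by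
        intro m hm
        have em1 : a (m+1) = Pint n f (m+1) ^ (((m:ℝ)+1)/(2*(n:ℝ))) := by
          show (if m+1 = 0 then S else Pint n f (m+1) ^ (((m+1:ℕ):ℝ)/(2*(n:ℝ)))) = _
          rw [if_neg (by omega)]
          congr 1
          push_cast
          ring
        have em2 : a (m+2) = Pint n f (m+2) ^ (((m:ℝ)+2)/(2*(n:ℝ))) := by
          show (if m+2 = 0 then S else Pint n f (m+2) ^ (((m+2:ℕ):ℝ)/(2*(n:ℝ)))) = _
          rw [if_neg (by omega)]
          congr 1
          push_cast
          ring
        rcases Nat.eq_zero_or_pos m with hm0 | hm1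
        · subst hm0
          have hst := step_one n hf hper (by omega) hSle (hall 1 le_rfl)
          have e0 : a 0 = S := if_pos rfl
          rw [em1, em2, e0]
          simpa using hst
        · have hst := step_mid n hf hper m hm1 hm (hall (m+1) (by omega))
          have em : a m = Pint n f m ^ ((m:ℝ)/(2*(n:ℝ))) := by
            show (if m = 0 then S else Pint n f m ^ ((m:ℝ)/(2*(n:ℝ)))) = _
            rw [if_neg (by omega)]
          rw [em1, em2, em]
          exact hst
      have hchain := chain_lemma hn hK1 hapos hrec i hi1 hin
      -- unfold the conclusion
      have hai : a i = (Pint n f i) ^ ((i:ℝ)/(2*(n:ℝ))) := by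
        show (if i = 0 then S else (Pint n f i) ^ ((i:ℝ)/(2*(n:ℝ)))) = _
        rw [if_neg (by omega)]
      have ha0 : a 0 = S := if_pos rfl
      have han : a n = (Pint n f n) ^ ((1:ℝ)/2) := by
        show (if n = 0 then S else (Pint n f n) ^ ((n:ℝ)/(2*(n:ℝ)))) = _
        rw [if_neg (by omega)]
        congr 1
        rw [eq_div_iff (by norm_num : (2:ℝ) ≠ 0)]
        field_simp
      rw [hai, ha0, han] at hchain
      have hexp0 : (0:ℝ) ≤ (i:ℝ)/n := by positivity
      have hanHS : ((Pint n f n) ^ ((1:ℝ)/2)) ^ ((i:ℝ)/n) ≤ HS ^ ((i:ℝ)/n) :=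
        Real.rpow_le_rpow (Real.rpow_nonneg (Pint_nonneg n f n) _) hPnHS hexp0
      have hsnn : 0 ≤ S ^ (1 - (i:ℝ)/n) := Real.rpow_nonneg hS0 _
      have hKnn : (0:ℝ) ≤ (2 * (n:ℝ)) ^ (n ^ 2) := by positivity
      calc (Pint n f i) ^ ((i:ℝ)/(2*(n:ℝ)))
          ≤ (2 * (n:ℝ)) ^ (n ^ 2)
            * (S ^ (1 - (i:ℝ)/n) * ((Pint n f n) ^ ((1:ℝ)/2)) ^ ((i:ℝ)/n)) := hchain
        _ ≤ (2 * (n:ℝ)) ^ (n ^ 2) * (S ^ (1 - (i:ℝ)/n) * HS ^ ((i:ℝ)/n)) := by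
            apply mul_le_mul_of_nonneg_left _ hKnn
            exact mul_le_mul_of_nonneg_left hanHS hsnn
        _ ≤ C * (S ^ (1 - (i:ℝ)/n) * HS ^ ((i:ℝ)/n)) := by
            apply mul_le_mul_of_nonneg_right _ (mul_nonneg hsnn (Real.rpow_nonneg hHS0 _))
            rw [hCdef]; linarith
        _ = C * S ^ (1 - (i:ℝ)/n) * HS ^ ((i:ℝ)/n) := by ring
end
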